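/- If X has RTGLE(α,β,γ,p) distribution, then for every positive integer r, the binomial-moment identity Σ_{i=0}^{r} C(r,i)·α^i·(β/2)^{r-i}·E[X^{2r-i}] = (1 + pr/γ)·Γ(r/γ + 1) holds, assuming all moments up to order 2r are finite. -/

import Mathlib

/-!
Write `H x = α x + β x² / 2`. Expanding `H x ^ r` binomially turns the left-hand side into
`∫ H(x)^r f(x) dx`, where `f` is the density. The density is `ψ'(x) (1 - p + p ψ(x)) e^{-ψ(x)}`
for `ψ = H^γ`, an increasing bijection of `(0, ∞)`, so the substitution `u = ψ(x)` gives
`∫₀^∞ u^{r/γ} (1 - p + p u) e^{-u} du = (1 - p) Γ(r/γ + 1) + p Γ(r/γ + 2)`,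
which is `(1 + p r/γ) Γ(r/γ + 1)`.
-/

open MeasureTheory Set Filter

noncomputable def rtglePDF (α β γ p : ℝ) (x : ℝ) : ℝ :=
  γ * (α + β * x) * (α * x + β * x ^ 2 / 2) ^ (γ - 1) *
    (1 - p + p * (α * x + β * x ^ 2 / 2) ^ γ) *
    Real.exp (-(α * x + β * x ^ 2 / 2) ^ γ)

/-- The cumulative hazard of the linear failure rate distribution; the RTGLE law is obtained from
it through `u = lfrCumHazard α β x ^ γ`. -/
noncomputable def lfrCumHazard (α β x : ℝ) : ℝ := α * x + β * x ^ 2 / 2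

section LfrCumHazard

variable {α β : ℝ}

lemma lfrCumHazard_zero : lfrCumHazard α β 0 = 0 := by
  simp [lfrCumHazard]

lemma hasDerivAt_lfrCumHazard (x : ℝ) : HasDerivAt (lfrCumHazard α β) (α + β * x) x := by
  have h : HasDerivAt (fun x => α * x + β * x ^ 2 / 2) (α * 1 + β * ((2 : ℕ) * x ^ 1) / 2) x :=
    ((hasDerivAt_id x).const_mul α).add (((hasDerivAt_pow 2 x).const_mul β).div_const 2)
  show HasDerivAt (fun x => α * x + β * x ^ 2 / 2) _ x
  convert h using 1
  push_cast
  ring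

lemma lfrCumHazard_pow_eq_sum (r : ℕ) (x : ℝ) :
    lfrCumHazard α β x ^ r = ∑ i ∈ Finset.range (r + 1),
      (r.choose i : ℝ) * α ^ i * (β / 2) ^ (r - i) * x ^ (2 * r - i) := by
  rw [lfrCumHazard, add_pow]
  refine Finset.sum_congr rfl fun i hi => ?_
  have hir : i ≤ r := Nat.lt_succ_iff.mp (Finset.mem_range.mp hi)
  have hx : x ^ (2 * r - i) = x ^ i * (x ^ 2) ^ (r - i) := by
    rw [← pow_mul, ← pow_add]
    congr 1
    omega
  rw [hx]
  ring

lemma sum_choose_mul_setIntegral_eq_setIntegral_lfrCumHazard_pow (r : ℕ) {f : ℝ → ℝ}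
    (hf : ∀ k ≤ 2 * r, IntegrableOn (fun x => x ^ k * f x) (Ioi 0)) :
    ∑ i ∈ Finset.range (r + 1),
        (r.choose i : ℝ) * α ^ i * (β / 2) ^ (r - i) * ∫ x in Ioi (0 : ℝ), x ^ (2 * r - i) * f x
      = ∫ x in Ioi (0 : ℝ), lfrCumHazard α β x ^ r * f x := by
  simp_rw [← integral_const_mul, lfrCumHazard_pow_eq_sum, Finset.sum_mul]
  rw [← integral_finsetSum _ fun i _ => (hf (2 * r - i) (by omega)).const_mul _]
  simp_rw [mul_assoc]

lemma continuous_lfrCumHazard : Continuous (lfrCumHazard α β) := by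
  unfold lfrCumHazard
  fun_prop

variable (hα : 0 ≤ α) (hβ : 0 ≤ β) (hαβ : 0 < α ∨ 0 < β)
include hα hβ hαβ

lemma add_mul_pos_of_pos {x : ℝ} (hx : 0 < x) : 0 < α + β * x := by
  rcases hαβ with h | h <;> positivity

lemma lfrCumHazard_pos {x : ℝ} (hx : 0 < x) : 0 < lfrCumHazard α β x := by
  unfold lfrCumHazard
  rcases hαβ with h | h <;> positivity

lemma tendsto_lfrCumHazard_atTop : Tendsto (lfrCumHazard α β) atTop atTop := by
  have hc : 0 < α + β / 2 := by rcases hαβ with h | h <;> positivity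
  refine tendsto_atTop_mono' _ ?_ (tendsto_id.const_mul_atTop hc)
  filter_upwards [eventually_ge_atTop 1] with x hx
  have hβx : β * x ≤ β * x ^ 2 := mul_le_mul_of_nonneg_left (by nlinarith) hβ
  simp only [lfrCumHazard, id]
  linarith

lemma strictMonoOn_lfrCumHazard : StrictMonoOn (lfrCumHazard α β) (Ici 0) := by
  refine strictMonoOn_of_deriv_pos (convex_Ici 0) continuous_lfrCumHazard.continuousOn
    fun x hx => ?_
  rw [interior_Ici] at hx
  rw [(hasDerivAt_lfrCumHazard x).deriv]
  exact add_mul_pos_of_pos hα hβ hαβ hx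

end LfrCumHazard

section LfrCumHazardRpow

variable {α β γ : ℝ}

lemma hasDerivAt_lfrCumHazard_rpow {x : ℝ} (hx : lfrCumHazard α β x ≠ 0) :
    HasDerivAt (fun x => lfrCumHazard α β x ^ γ)
      (γ * (α + β * x) * lfrCumHazard α β x ^ (γ - 1)) x := by
  convert (hasDerivAt_lfrCumHazard x).rpow_const (p := γ) (Or.inl hx) using 1
  ring

variable (hα : 0 ≤ α) (hβ : 0 ≤ β) (hαβ : 0 < α ∨ 0 < β) (hγ : 0 < γ)
include hα hβ hαβ hγ

lemma strictMonoOn_lfrCumHazard_rpow :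
    StrictMonoOn (fun x => lfrCumHazard α β x ^ γ) (Ici 0) := by
  refine (Real.strictMonoOn_rpow_Ici_of_exponent_pos hγ).comp
    (strictMonoOn_lfrCumHazard hα hβ hαβ) fun x hx => ?_
  rw [← lfrCumHazard_zero (α := α) (β := β)]
  exact (strictMonoOn_lfrCumHazard hα hβ hαβ).monotoneOn self_mem_Ici hx hx

lemma image_lfrCumHazard_rpow_Ioi : (fun x => lfrCumHazard α β x ^ γ) '' Ioi 0 = Ioi 0 := by
  have hcont : ContinuousOn (fun x => lfrCumHazard α β x ^ γ) (Ici 0) :=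
    (continuous_lfrCumHazard.rpow_const fun _ => Or.inr hγ.le).continuousOn
  have htop := (tendsto_rpow_atTop hγ).comp (tendsto_lfrCumHazard_atTop hα hβ hαβ)
  simpa [lfrCumHazard_zero, Real.zero_rpow hγ.ne'] using
    hcont.image_Ioi_of_strictMonoOn (strictMonoOn_lfrCumHazard_rpow hα hβ hαβ hγ) htop

lemma setIntegral_lfrCumHazard_rpow_substitution (g : ℝ → ℝ) :
    ∫ x in Ioi 0, γ * (α + β * x) * lfrCumHazard α β x ^ (γ - 1) * g (lfrCumHazard α β x ^ γ)
      = ∫ u in Ioi 0, g u := by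
  have hderiv : ∀ x ∈ Ioi (0 : ℝ), HasDerivWithinAt (fun x => lfrCumHazard α β x ^ γ)
      (γ * (α + β * x) * lfrCumHazard α β x ^ (γ - 1)) (Ioi 0) x := fun x hx =>
    (hasDerivAt_lfrCumHazard_rpow (lfrCumHazard_pos hα hβ hαβ hx).ne').hasDerivWithinAt
  have hinj := (strictMonoOn_lfrCumHazard_rpow hα hβ hαβ hγ).injOn.mono Ioi_subset_Ici_self
  have hsubst := integral_image_eq_integral_abs_deriv_smul measurableSet_Ioi hderiv hinj g
  rw [image_lfrCumHazard_rpow_Ioi hα hβ hαβ hγ] at hsubst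
  rw [hsubst]
  refine setIntegral_congr_fun measurableSet_Ioi fun x hx => ?_
  have hH := lfrCumHazard_pos hα hβ hαβ hx
  have hc := add_mul_pos_of_pos hα hβ hαβ hx
  rw [smul_eq_mul, abs_of_pos (by positivity)]

end LfrCumHazardRpow

lemma integral_rpow_mul_affine_mul_exp_neg {a : ℝ} (ha : -1 < a) (c d : ℝ) :
    ∫ u in Ioi (0 : ℝ), u ^ a * (c + d * u) * Real.exp (-u)
      = (c + d * (a + 1)) * Real.Gamma (a + 1) := by
  have ha₁ : 0 < a + 1 := by linarith
  have ha₂ : 0 < a + 2 := by linarith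
  have hsplit : EqOn (fun u : ℝ => u ^ a * (c + d * u) * Real.exp (-u))
      (fun u => c * (Real.exp (-u) * u ^ (a + 1 - 1)) + d * (Real.exp (-u) * u ^ (a + 2 - 1)))
      (Ioi 0) := fun u (hu : 0 < u) => by
    dsimp only
    rw [show a + 1 - 1 = a by ring, show a + 2 - 1 = a + 1 by ring, Real.rpow_add_one hu.ne']
    ring
  rw [setIntegral_congr_fun measurableSet_Ioi hsplit,
    integral_add ((Real.GammaIntegral_convergent ha₁).const_mul _)
      ((Real.GammaIntegral_convergent ha₂).const_mul _),
    integral_const_mul, integral_const_mul, ← Real.Gamma_eq_integral ha₁,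
    ← Real.Gamma_eq_integral ha₂, show a + 2 = a + 1 + 1 by ring, Real.Gamma_add_one ha₁.ne']
  ring

theorem rtgle_binomial_moment_identity_general (α β γ p : ℝ) (r : ℕ)
    (hα : 0 ≤ α) (hβ : 0 ≤ β) (hαβ : ¬(α = 0 ∧ β = 0)) (hγ : 0 < γ)
    (hI : ∀ k ≤ 2 * r, IntegrableOn (fun x => x ^ k * rtglePDF α β γ p x) (Set.Ioi 0)) :
    ∑ i ∈ Finset.range (r + 1),
        (r.choose i : ℝ) * α ^ i * (β / 2) ^ (r - i) *
          ∫ x in Set.Ioi (0 : ℝ), x ^ (2 * r - i) * rtglePDF α β γ p x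
      = (1 + p * r / γ) * Real.Gamma (r / γ + 1) := by
  have hαβ' : 0 < α ∨ 0 < β := by
    by_contra! h
    exact hαβ ⟨le_antisymm h.1 hα, le_antisymm h.2 hβ⟩
  set H := lfrCumHazard α β
  have hintegrand : EqOn (fun x => H x ^ r * rtglePDF α β γ p x)
      (fun x => γ * (α + β * x) * H x ^ (γ - 1) *
        ((H x ^ γ) ^ (r / γ) * (1 - p + p * H x ^ γ) * Real.exp (-H x ^ γ))) (Ioi 0) :=
    fun x hx => by
      dsimp only
      rw [← Real.rpow_mul (lfrCumHazard_pos hα hβ hαβ' hx).le, mul_div_cancel₀ _ hγ.ne',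
        Real.rpow_natCast]
      simp only [rtglePDF, H, lfrCumHazard]
      ring
  rw [sum_choose_mul_setIntegral_eq_setIntegral_lfrCumHazard_pow r hI,
    setIntegral_congr_fun measurableSet_Ioi hintegrand,
    setIntegral_lfrCumHazard_rpow_substitution hα hβ hαβ' hγ
      (fun u => u ^ (r / γ) * (1 - p + p * u) * Real.exp (-u)),
    integral_rpow_mul_affine_mul_exp_neg (by linarith [show 0 ≤ (r : ℝ) / γ by positivity])]
  ring

/-- Binomial-moment identity for `X ∼ RTGLE(α,β,γ,p)`:
`∑ᵢ C(r,i) αⁱ (β/2)^{r-i} E[X^{2r-i}] = (1 + pr/γ)Γ(r/γ + 1)`. -/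
theorem rtgle_binomial_moment_identity (α β γ p : ℝ) (r : ℕ) (hr : 1 ≤ r)
    (hα : 0 ≤ α) (hβ : 0 ≤ β) (hαβ : ¬(α = 0 ∧ β = 0)) (hγ : 0 < γ)
    (hp0 : 0 ≤ p) (hp1 : p ≤ 1)
    (hI : ∀ k ≤ 2 * r, IntegrableOn (fun x => x ^ k * rtglePDF α β γ p x) (Set.Ioi 0)) :
    ∑ i ∈ Finset.range (r + 1),
        (r.choose i : ℝ) * α ^ i * (β / 2) ^ (r - i) *
          ∫ x in Set.Ioi (0 : ℝ), x ^ (2 * r - i) * rtglePDF α β γ p x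
      = (1 + p * r / γ) * Real.Gamma (r / γ + 1) :=
  rtgle_binomial_moment_identity_general α β γ p r hα hβ hαβ hγ hI
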